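/- For every integer s ≥ 2 there exists a constant C > 0 such that for every complex z with |z| ≤ 1, the local error of the RKG2 stability polynomial against the exponential satisfies |R_s(z) − exp(z)| ≤ C·|z|^3. -/

import Mathlib

/-- The Gegenbauer polynomials with parameter 3/2, evaluated at complex arguments:
`C_0(x) = 1`, `C_1(x) = 3x`, and
`C_j(x) = ((2j+1)/j)·x·C_{j-1}(x) − ((j+1)/j)·C_{j-2}(x)` for `j ≥ 2`. -/
noncomputable def gegenbauerC : ℕ → ℂ → ℂ
  | 0, _ => 1
  | 1, x => 3 * x
  | (j + 2), x =>
      (2 * ((j : ℂ) + 2) + 1) / ((j : ℂ) + 2) * x * gegenbauerC (j + 1) x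
        - (((j : ℂ) + 2) + 1) / ((j : ℂ) + 2) * gegenbauerC j x

/-- The RKG2 coefficient `b_j = 4(j−1)(j+4)/(3j(j+1)(j+2)(j+3))`. -/
noncomputable def rkg2B (j : ℕ) : ℝ :=
  4 * ((j : ℝ) - 1) * ((j : ℝ) + 4) /
    (3 * (j : ℝ) * ((j : ℝ) + 1) * ((j : ℝ) + 2) * ((j : ℝ) + 3))

/-- The RKG2 coefficient `a_j = 1 − ((j+1)(j+2)/2)·b_j`. -/
noncomputable def rkg2A (j : ℕ) : ℝ :=
  1 - ((j : ℝ) + 1) * ((j : ℝ) + 2) / 2 * rkg2B j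

/-- The RKG2 parameter `w_1 = 6/((s+4)(s−1))`. -/
noncomputable def rkg2W (s : ℕ) : ℝ := 6 / (((s : ℝ) + 4) * ((s : ℝ) - 1))

/-- The RKG2 stability polynomial `R_j(z) = a_j + b_j·C_j(1 + w_1·z)`, evaluated at complex
arguments, where `w_1` is built from the stage number `s`. -/
noncomputable def rkg2RC (s j : ℕ) (z : ℂ) : ℂ :=
  (rkg2A j : ℂ) + (rkg2B j : ℂ) * gegenbauerC j (1 + (rkg2W s : ℂ) * z)

/-! Writing `y = w₁ z`, the map `y ↦ C_s(1 + y)` is a polynomial whose first three coefficients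
`C_s(1)`, `C_s'(1)` and `C_s''(1)/2` have closed forms, obtained from the three-term recurrence.
With these, the choice of `a_s`, `b_s` and `w₁` makes `R_s` agree with `1 + z + z²/2` up to
order two, so `R_s(z) − exp z` is `z³` times a polynomial, bounded on the unit disk by
compactness, minus the Taylor remainder of the exponential. -/

open Polynomial Nat

namespace Polynomial

variable {R : Type*} [Semiring R]

theorem coeff_one_add_X_mul_zero (p : R[X]) : ((1 + X) * p).coeff 0 = p.coeff 0 := by
  simp [add_mul]

theorem coeff_one_add_X_mul_succ (p : R[X]) (k : ℕ) :
    ((1 + X) * p).coeff (k + 1) = p.coeff (k + 1) + p.coeff k := by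
  simp [add_mul, coeff_X_mul]

theorem exists_norm_eval_sub_exp_le_of_coeff_eq {P : ℂ[X]} {n : ℕ} (hn : 0 < n)
    (hP : ∀ k < n, P.coeff k = (k ! : ℂ)⁻¹) :
    ∃ C : ℝ, 0 < C ∧ ∀ z : ℂ, ‖z‖ ≤ 1 → ‖P.eval z - Complex.exp z‖ ≤ C * ‖z‖ ^ n := by
  set T : ℂ[X] := ∑ k ∈ Finset.range n, C (k ! : ℂ)⁻¹ * X ^ k
  have hT : ∀ z, T.eval z = ∑ k ∈ Finset.range n, z ^ k / (k ! : ℂ) := fun z => by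
    simp [T, eval_finsetSum, div_eq_inv_mul]
  obtain ⟨G, hG⟩ : X ^ n ∣ P - T := X_pow_dvd_iff.mpr fun d hd => by
    simp [T, hP d hd, hd]
  obtain ⟨M, hM⟩ := (isCompact_closedBall (0 : ℂ) 1).exists_bound_of_continuousOn
    G.continuous.continuousOn
  set K : ℝ := (n.succ : ℝ) * (n ! * n : ℝ)⁻¹
  refine ⟨max M 0 + K, by positivity, fun z hz => ?_⟩
  have hGz : ‖G.eval z‖ ≤ max M 0 := (hM z (by simpa using hz)).trans (le_max_left _ _)
  have hsplit : P.eval z - Complex.exp z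
      = z ^ n * G.eval z - (Complex.exp z - ∑ k ∈ Finset.range n, z ^ k / (k ! : ℂ)) := by
    have := congrArg (eval z) hG
    simp only [eval_sub, eval_mul, eval_pow, eval_X, hT] at this
    rw [← this]; ring
  calc ‖P.eval z - Complex.exp z‖
      ≤ ‖z ^ n * G.eval z‖ + ‖Complex.exp z - ∑ k ∈ Finset.range n, z ^ k / (k ! : ℂ)‖ := by
        rw [hsplit]; exact norm_sub_le _ _
    _ ≤ ‖z‖ ^ n * max M 0 + ‖z‖ ^ n * K := by
        rw [norm_mul, norm_pow]
        gcongr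
        exact Complex.exp_bound hz hn
    _ = (max M 0 + K) * ‖z‖ ^ n := by ring

end Polynomial

noncomputable def shiftedGegenbauer : ℕ → ℂ[X]
  | 0 => 1
  | 1 => C 3 * (1 + X)
  | (j + 2) =>
      C ((2 * ((j : ℂ) + 2) + 1) / ((j : ℂ) + 2)) * ((1 + X) * shiftedGegenbauer (j + 1))
        - C ((((j : ℂ) + 2) + 1) / ((j : ℂ) + 2)) * shiftedGegenbauer j

theorem eval_shiftedGegenbauer (j : ℕ) (y : ℂ) :
    (shiftedGegenbauer j).eval y = gegenbauerC j (1 + y) := by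
  induction j using Nat.twoStepInduction with
  | zero => simp [shiftedGegenbauer, gegenbauerC]
  | one => simp [shiftedGegenbauer, gegenbauerC]
  | more j ih₀ ih₁ =>
    simp only [shiftedGegenbauer, gegenbauerC, eval_sub, eval_mul, eval_C, eval_add, eval_one,
      eval_X, ih₀, ih₁]
    ring

theorem shiftedGegenbauer_coeff_zero (j : ℕ) :
    (shiftedGegenbauer j).coeff 0 = ((j : ℂ) + 1) * ((j : ℂ) + 2) / 2 := by
  induction j using Nat.twoStepInduction with
  | zero => simp [shiftedGegenbauer]
  | one => simp [shiftedGegenbauer]; norm_num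
  | more j ih₀ ih₁ =>
    have : (j : ℂ) + 2 ≠ 0 := by norm_cast
    simp only [shiftedGegenbauer, coeff_sub, coeff_C_mul, coeff_one_add_X_mul_zero, ih₀, ih₁]
    push_cast
    field_simp
    ring

theorem shiftedGegenbauer_coeff_one (j : ℕ) :
    (shiftedGegenbauer j).coeff 1 = (j : ℂ) * (j + 1) * (j + 2) * (j + 3) / 8 := by
  induction j using Nat.twoStepInduction with
  | zero => simp [shiftedGegenbauer, coeff_one]
  | one => simp [shiftedGegenbauer, coeff_one]; norm_num
  | more j ih₀ ih₁ =>
    have : (j : ℂ) + 2 ≠ 0 := by norm_cast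
    simp only [shiftedGegenbauer, coeff_sub, coeff_C_mul, coeff_one_add_X_mul_succ,
      shiftedGegenbauer_coeff_zero, ih₀, ih₁]
    push_cast
    field_simp
    ring

theorem shiftedGegenbauer_coeff_two (j : ℕ) :
    (shiftedGegenbauer j).coeff 2 =
      ((j : ℂ) - 1) * j * (j + 1) * (j + 2) * (j + 3) * (j + 4) / 96 := by
  induction j using Nat.twoStepInduction with
  | zero => simp [shiftedGegenbauer, coeff_one]
  | one => simp [shiftedGegenbauer, coeff_one, coeff_X]
  | more j ih₀ ih₁ =>
    have : (j : ℂ) + 2 ≠ 0 := by norm_cast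
    simp only [shiftedGegenbauer, coeff_sub, coeff_C_mul, coeff_one_add_X_mul_succ,
      shiftedGegenbauer_coeff_one, ih₀, ih₁]
    push_cast
    field_simp
    ring

noncomputable def rkg2Poly (s j : ℕ) : ℂ[X] :=
  C (rkg2A j : ℂ) + C (rkg2B j : ℂ) * (shiftedGegenbauer j).comp (C (rkg2W s : ℂ) * X)

theorem eval_rkg2Poly (s j : ℕ) (z : ℂ) : (rkg2Poly s j).eval z = rkg2RC s j z := by
  simp [rkg2Poly, rkg2RC, eval_comp, eval_shiftedGegenbauer]

theorem rkg2Poly_coeff_zero (s j : ℕ) : (rkg2Poly s j).coeff 0 = 1 := by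
  simp only [rkg2Poly, coeff_add, coeff_C_zero, coeff_C_mul, comp_C_mul_X_coeff,
    shiftedGegenbauer_coeff_zero, rkg2A]
  push_cast
  ring

theorem rkg2B_mul_rkg2W {s : ℕ} (hs : 2 ≤ s) :
    rkg2B s * rkg2W s * ((s : ℝ) * (s + 1) * (s + 2) * (s + 3) / 8) = 1 := by
  have : (2 : ℝ) ≤ s := by exact_mod_cast hs
  have : (s : ℝ) - 1 ≠ 0 := by linarith
  have : (s : ℝ) ≠ 0 := by linarith
  unfold rkg2B rkg2W
  field_simp
  ring

theorem rkg2B_mul_rkg2W_sq {s : ℕ} (hs : 2 ≤ s) :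
    rkg2B s * rkg2W s ^ 2 * (((s : ℝ) - 1) * s * (s + 1) * (s + 2) * (s + 3) * (s + 4) / 96)
      = 1 / 2 := by
  have : (2 : ℝ) ≤ s := by exact_mod_cast hs
  have : (s : ℝ) - 1 ≠ 0 := by linarith
  have : (s : ℝ) ≠ 0 := by linarith
  unfold rkg2B rkg2W
  field_simp
  ring

theorem rkg2Poly_coeff_one {s : ℕ} (hs : 2 ≤ s) : (rkg2Poly s s).coeff 1 = 1 := by
  have h : ((rkg2B s * rkg2W s * ((s : ℝ) * (s + 1) * (s + 2) * (s + 3) / 8) : ℝ) : ℂ) = 1 := by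
    rw [rkg2B_mul_rkg2W hs, Complex.ofReal_one]
  simp only [rkg2Poly, coeff_add, coeff_C, coeff_C_mul, comp_C_mul_X_coeff,
    shiftedGegenbauer_coeff_one]
  push_cast at h ⊢
  linear_combination h

theorem rkg2Poly_coeff_two {s : ℕ} (hs : 2 ≤ s) : (rkg2Poly s s).coeff 2 = 1 / 2 := by
  have h : ((rkg2B s * rkg2W s ^ 2 *
      (((s : ℝ) - 1) * s * (s + 1) * (s + 2) * (s + 3) * (s + 4) / 96) : ℝ) : ℂ) = 1 / 2 := by
    rw [rkg2B_mul_rkg2W_sq hs]; push_cast; ring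
  simp only [rkg2Poly, coeff_add, coeff_C, coeff_C_mul, comp_C_mul_X_coeff,
    shiftedGegenbauer_coeff_two]
  push_cast at h ⊢
  linear_combination h

/-- For every integer `s ≥ 2` there exists a constant `C > 0` such that for every complex `z`
with `|z| ≤ 1`, the local error of the RKG2 stability polynomial against the exponential
satisfies `|R_s(z) − exp(z)| ≤ C·|z|^3`. -/
theorem rkg2_local_error (s : ℕ) (hs : 2 ≤ s) :
    ∃ C : ℝ, 0 < C ∧ ∀ z : ℂ, ‖z‖ ≤ 1 →
      ‖rkg2RC s s z - Complex.exp z‖ ≤ C * ‖z‖ ^ 3 := by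
  have hcoeff : ∀ k < 3, (rkg2Poly s s).coeff k = (k ! : ℂ)⁻¹ := fun k hk => by
    interval_cases k
    · simp [rkg2Poly_coeff_zero]
    · simp [rkg2Poly_coeff_one hs]
    · simp [rkg2Poly_coeff_two hs]
  obtain ⟨C, hC, hbound⟩ := exists_norm_eval_sub_exp_le_of_coeff_eq (by norm_num) hcoeff
  exact ⟨C, hC, fun z hz => by simpa [eval_rkg2Poly] using hbound z hz⟩
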